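/- Incompleteness of geometric nontermination arguments: Consider the linear loop program P = (true, LOOP) over ℝ² with LOOP = { ((a,b), (a',b')) : a ≥ 1 ∧ b ≥ 1 ∧ a' = 2a ∧ b' = 3b }. Then P has an infinite execution, namely x_t = (2^t, 3^t), but P has no geometric nontermination argument: there is no tuple (x₀, x₁, y, λ) with x₀, x₁, y ∈ ℝ², λ > 0, such that (x₁, x₁ + y) ∈ LOOP and, writing y = (y₁, y₂), the ray condition holds (i.e., λ·y₁ = 2y₁, λ·y₂ = 3y₂, y₁ ≥ 0, y₂ ≥ 0, as imposed by the defining linear constraints of LOOP applied to (y, λy) with right-hand side 0). -/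
import Mathlib


/-- The loop relation of the program `while (a ≥ 1 ∧ b ≥ 1): a := 2a; b := 3b`
over `ℝ²`, given by the linear constraints
`−a ≤ −1, −b ≤ −1, a' − 2a ≤ 0, 2a − a' ≤ 0, b' − 3b ≤ 0, 3b − b' ≤ 0`. -/
def LoopEx23 : (ℝ × ℝ) → (ℝ × ℝ) → Prop :=
  fun p q => 1 ≤ p.1 ∧ 1 ≤ p.2 ∧ q.1 = 2 * p.1 ∧ q.2 = 3 * p.2

/-- **Incompleteness of geometric nontermination arguments.**
The linear loop program `P = (true, LoopEx23)` has an infinite execution,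
namely `x_t = (2^t, 3^t)`, but it has no geometric nontermination argument:
there are no `x₁, y ∈ ℝ²` and `lam > 0` such that `(x₁, x₁ + y) ∈ LOOP`
(the point condition) and the ray condition
`lam·y₁ = 2·y₁ ∧ lam·y₂ = 3·y₂ ∧ y₁ ≥ 0 ∧ y₂ ≥ 0` holds
(as imposed by the defining linear constraints applied to `(y, lam·y)` with
right-hand side `0`). -/
theorem no_geometric_nontermination_argument_for_2_3_loop :
    (∀ t : ℕ, LoopEx23 ((2 : ℝ) ^ t, (3 : ℝ) ^ t) ((2 : ℝ) ^ (t + 1), (3 : ℝ) ^ (t + 1))) ∧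
    ¬ ∃ (x₀ x₁ y : ℝ × ℝ) (lam : ℝ),
        0 < lam ∧
        LoopEx23 x₁ (x₁.1 + y.1, x₁.2 + y.2) ∧
        lam * y.1 = 2 * y.1 ∧ lam * y.2 = 3 * y.2 ∧ 0 ≤ y.1 ∧ 0 ≤ y.2 := by
  constructor
  · intro t
    refine ⟨one_le_pow₀ (by norm_num), one_le_pow₀ (by norm_num), ?_, ?_⟩ <;>
      simp [pow_succ, mul_comm]
  · rintro ⟨x₀, x₁, y, lam, hlam, ⟨h1, h2, h3, h4⟩, hr1, hr2, -, -⟩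
    have hy1 : y.1 = x₁.1 := by dsimp at h3; linarith
    have hy2 : y.2 = 2 * x₁.2 := by dsimp at h4; linarith
    have : lam = 2 := by
      have : y.1 ≥ 1 := by rw [hy1]; exact h1
      nlinarith
    have : lam = 3 := by
      have : y.2 ≥ 2 := by rw [hy2]; linarith
      nlinarith
    linarith
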